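/- arXiv:2410.09683 — 4 statements merged into one kernel-verified Lean document; each statement's English description precedes it below -/
import Mathlib

section
/- Let n ≥ 2 and α > 0, and define v(x) := α·log|x| on ℝⁿ \ {0}. Then for every x ≠ 0 the eigenvalues of A[v](x) are, up to permutation, C(|x|)·(1, −1, …, −1), where C(r) = α(α+2)/(2·r^(2α+2)) > 0. Consequently, for every cone Γ satisfying condition (C) with λ* := (1,−1,…,−1) ∈ closure(Γ), one has λ(A[v]) ∈ closure(Γ) on ℝⁿ \ {0} and ∂v/∂xₙ = 0 on ∂ℝⁿ₊ \ {0}, while liminf_{x→0} v(x) = −∞. (Hence the hypothesis λ* ∉ closure(Γ) in the boundary-singularity lower-bound proposition is optimal.) -/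
noncomputable section

open Filter Metric Polynomial MeasureTheory
open scoped Topology

namespace CLL

abbrev E (d : ℕ) := EuclideanSpace ℝ (Fin d)

/-- One-sided partial derivative (within a set `s`) in the `i`-th coordinate direction. -/
def pd (d : ℕ) (s : Set (E d)) (v : E d → ℝ) (i : Fin d) (x : E d) : ℝ :=
  fderivWithin ℝ v s x (EuclideanSpace.single i 1)

/-- The Möbius Hessian `A[v] = e^{-2v} (-∇² v + ∇v ⊗ ∇v - |∇v|²/2 · I)`,
computed with derivatives within `s`. -/
def mHess (d : ℕ) (s : Set (E d)) (v : E d → ℝ) (x : E d) : Matrix (Fin d) (Fin d) ℝ :=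
  fun i j =>
    Real.exp (-2 * v x) *
      (-(pd d s (fun y => pd d s v j y) i x)
        + pd d s v i x * pd d s v j x
        - (1 / 2) * (∑ k, (pd d s v k x) ^ 2) * (if i = j then (1 : ℝ) else 0))

/-- `μ` lists the eigenvalues (with multiplicity, in some order) of the matrix `M`. -/
def IsEigList (d : ℕ) (M : Matrix (Fin d) (Fin d) ℝ) (μ : Fin d → ℝ) : Prop :=
  M.charpoly = ∏ i, (X - C (μ i))

/-- `λ* = (1, -1, …, -1)`. -/
def lamStar (d : ℕ) : Fin d → ℝ := fun i => if (i : ℕ) = 0 then 1 else -1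

/-- Condition (C): `Γ ⊊ ℝⁿ` is a nonempty open symmetric cone with vertex at the origin
satisfying `Γ + Γₙ ⊆ Γ`. -/
def CondC (d : ℕ) (Γ : Set (Fin d → ℝ)) : Prop :=
  Γ.Nonempty ∧ Γ ≠ Set.univ ∧ IsOpen Γ ∧
    (∀ t : ℝ, 0 < t → ∀ lam ∈ Γ, t • lam ∈ Γ) ∧
    (∀ σ : Equiv.Perm (Fin d), ∀ lam ∈ Γ, lam ∘ σ ∈ Γ) ∧
    (∀ lam ∈ Γ, ∀ μ : Fin d → ℝ, (∀ i, 0 < μ i) → lam + μ ∈ Γ)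

/-- Condition (F): `f` is symmetric on `Γ`, locally Lipschitz, and for each compact
`K ⊆ Γ` its partial derivatives are bounded below a.e. on `K` by a positive constant. -/
def CondF (d : ℕ) (Γ : Set (Fin d → ℝ)) (f : (Fin d → ℝ) → ℝ) : Prop :=
  (∀ σ : Equiv.Perm (Fin d), ∀ lam ∈ Γ, f (lam ∘ σ) = f lam) ∧
  (∀ lam ∈ Γ, ∃ K : NNReal, ∃ t ∈ nhdsWithin lam Γ, LipschitzOnWith K f t) ∧
  (∀ K : Set (Fin d → ℝ), K ⊆ Γ → IsCompact K →
    ∃ c > (0 : ℝ), ∀ᵐ lam ∂(volume.restrict K),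
      ∀ i : Fin d, c ≤ lineDeriv ℝ f lam (Pi.single i 1))

/-- The index of the last coordinate. -/
def lastIdx (n : ℕ) : Fin (n + 2) := Fin.last (n + 1)

/-- The open upper half space `ℝⁿ₊`. -/
def upperH (n : ℕ) : Set (E (n + 2)) := {x | 0 < x (lastIdx n)}

/-- The standard bubble `log (a / (1 + b |x - x̄|²))`. -/
def bubble (n : ℕ) (a b : ℝ) (xbar : E (n + 2)) (x : E (n + 2)) : ℝ :=
  Real.log (a / (1 + b * ‖x - xbar‖ ^ 2))

/-- The open upper half ball `B_r⁺`. -/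
def Bplus (n : ℕ) (r : ℝ) : Set (E (n + 2)) := Metric.ball 0 r ∩ upperH n

/-- The set defining `μ_Γ⁻`. -/
def muSet (d : ℕ) (Γ : Set (Fin d → ℝ)) : Set ℝ :=
  {c : ℝ | (fun i : Fin d => if (i : ℕ) = 0 then c else -1) ∈ closure Γ}

/-- `μ_Γ⁻ = inf { c : (c,-1,…,-1) ∈ closure Γ }`. -/
def muMinus (d : ℕ) (Γ : Set (Fin d → ℝ)) : ℝ :=
  sInf (muSet d Γ)

end CLL

open CLL


section Aux

open Polynomial Matrix

lemma eval_charpoly' {d : ℕ} (M : Matrix (Fin d) (Fin d) ℝ) (t : ℝ) :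
    (M.charpoly).eval t = (t • (1 : Matrix (Fin d) (Fin d) ℝ) - M).det := by
  rw [Matrix.charpoly, ← coe_evalRingHom, RingHom.map_det]
  congr 1
  ext i j
  by_cases h : i = j
  · subst h; simp [charmatrix_apply_eq, Matrix.one_apply]
  · simp [charmatrix_apply_ne _ _ _ h, Matrix.one_apply, h]

lemma charpoly_rank_one (n : ℕ) (u : Fin (n+2) → ℝ) (c s : ℝ)
    (hs : ∑ i, u i ^ 2 = s) (hs0 : s ≠ 0)
    (M : Matrix (Fin (n+2)) (Fin (n+2)) ℝ)
    (hM : ∀ i j, M i j = c * (2 * u i * u j / s - if i = j then (1:ℝ) else 0)) :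
    M.charpoly = ∏ i, (X - C (c * lamStar (n+2) i)) := by
  apply Polynomial.eq_of_infinite_eval_eq
  have hinf : ({t : ℝ | t ≠ -c}).Infinite :=
    Set.Infinite.mono (fun t (ht : t ∈ Set.Iio (-c)) => ne_of_lt ht) (Set.Iio_infinite (-c))
  apply hinf.mono
  intro t (ht : t ≠ -c)
  · have hta : t + c ≠ 0 := by
      intro h; apply ht; linarith
    rw [Set.mem_setOf_eq, eval_charpoly', eval_prod]
    have key : t • (1 : Matrix (Fin (n+2)) (Fin (n+2)) ℝ) - M
        = (t + c) • (1 + Matrix.replicateCol Unit (fun i => (-2 * c / (s * (t + c))) * u i) * Matrix.replicateRow Unit u) := by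
      ext i j
      simp only [Matrix.sub_apply, Matrix.smul_apply, Matrix.add_apply, Matrix.one_apply, hM,
        Matrix.mul_apply, Matrix.replicateCol_apply, Matrix.replicateRow_apply, Finset.univ_unique,
        Finset.sum_singleton, smul_eq_mul]
      by_cases h : i = j <;> simp only [h, if_true, if_false] <;> field_simp <;> ring
    rw [key, Matrix.det_smul, Matrix.det_one_add_replicateCol_mul_replicateRow]
    have hdot : (u ⬝ᵥ fun i => (-2 * c / (s * (t + c))) * u i) = -2 * c / (t + c) := by
      simp only [dotProduct]
      rw [Finset.sum_congr rfl (fun i _ => by ring : ∀ i ∈ Finset.univ,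
        u i * ((-2 * c / (s * (t + c))) * u i) = (-2 * c / (s * (t + c))) * u i ^ 2)]
      rw [← Finset.mul_sum, hs]
      field_simp
    rw [hdot]
    have hprod : ∏ i : Fin (n+2), ((X : ℝ[X]) - C (c * lamStar (n+2) i)).eval t
        = (t - c) * (t + c) ^ (n + 1) := by
      rw [Fin.prod_univ_succ]
      simp only [lamStar, Fin.val_zero, if_true, eval_sub, eval_X, eval_C]
      congr 1
      · norm_num
      · rw [Finset.prod_congr rfl (fun i _ => ?_), Finset.prod_const, Finset.card_univ,
          Fintype.card_fin]
        have : ((i.succ : Fin (n+2)) : ℕ) ≠ 0 := by simp [Fin.val_succ]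
        simp [this]
    rw [hprod, Fintype.card_fin]
    field_simp
    ring

end Aux



/-- The radial function `α log |x|`. -/
def v5 (n : ℕ) (α : ℝ) (x : E (n + 2)) : ℝ := α * Real.log ‖x‖

section Calc

noncomputable def Qsum (n : ℕ) (x : E (n+2)) : ℝ := ∑ i, x i ^ 2

lemma norm_sq_eq (n : ℕ) (x : E (n+2)) : Qsum n x = ‖x‖ ^ 2 := by
  rw [EuclideanSpace.norm_eq]
  rw [Real.sq_sqrt (by positivity)]
  simp [Qsum, sq_abs]

lemma Q_pos {n : ℕ} {x : E (n+2)} (hx : x ≠ 0) : 0 < Qsum n x := by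
  rw [norm_sq_eq]; exact pow_pos (norm_pos_iff.mpr hx) 2

lemma hasFDerivAt_Q (n : ℕ) (x : E (n+2)) :
    HasFDerivAt (Qsum n) (∑ i, (2 * x i) • (EuclideanSpace.proj i : E (n+2) →L[ℝ] ℝ)) x := by
  have : ∀ i : Fin (n+2), HasFDerivAt (fun y : E (n+2) => y i ^ 2)
      ((2 * x i) • (EuclideanSpace.proj i : E (n+2) →L[ℝ] ℝ)) x := by
    intro i
    have h1 : HasFDerivAt (fun y : E (n+2) => y i) (EuclideanSpace.proj i : E (n+2) →L[ℝ] ℝ) x :=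
      (EuclideanSpace.proj i : E (n+2) →L[ℝ] ℝ).hasFDerivAt
    have := h1.mul h1
    have h2 : (x i • (EuclideanSpace.proj i : E (n+2) →L[ℝ] ℝ) + x i • (EuclideanSpace.proj i : E (n+2) →L[ℝ] ℝ)) = (2 * x i) • (EuclideanSpace.proj i : E (n+2) →L[ℝ] ℝ) := by
      rw [← add_smul]; ring_nf
    rw [← h2]
    have h3 : (fun y : E (n+2) => y i ^ 2) = (fun y => y i) * (fun y => y i) := by
      funext y; simp [sq]
    rw [h3]; exact this
  exact HasFDerivAt.fun_sum (fun i _ => this i)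

lemma proj_single {n : ℕ} (i j : Fin (n+2)) :
    (EuclideanSpace.proj i : E (n+2) →L[ℝ] ℝ) (EuclideanSpace.single j 1) = if i = j then 1 else 0 := by
  have : (EuclideanSpace.proj i : E (n+2) →L[ℝ] ℝ) (EuclideanSpace.single j 1) = (EuclideanSpace.single j (1:ℝ) : E (n+2)) i := rfl
  rw [this, EuclideanSpace.single_apply]

lemma v5_eq (n : ℕ) (α : ℝ) : v5 n α = fun x => α / 2 * Real.log (Qsum n x) := by
  funext x
  rw [norm_sq_eq, Real.log_pow]
  push_cast [v5]
  ring

lemma hasFDerivAt_v5 (n : ℕ) (α : ℝ) {x : E (n+2)} (hx : x ≠ 0) :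
    HasFDerivAt (v5 n α) ((α / 2 * (Qsum n x)⁻¹) • (∑ i, (2 * x i) • (EuclideanSpace.proj i : E (n+2) →L[ℝ] ℝ))) x := by
  rw [v5_eq]
  have hlog : HasDerivAt Real.log (Qsum n x)⁻¹ (Qsum n x) := Real.hasDerivAt_log (Q_pos hx).ne'
  have := (hlog.comp_hasFDerivAt x (hasFDerivAt_Q n x)).const_mul (α / 2)
  refine this.congr_fderiv ?_
  ext v
  simp [smul_smul, mul_comm, mul_assoc, mul_left_comm]

lemma pd_v5 (n : ℕ) (α : ℝ) {x : E (n+2)} (hx : x ≠ 0) (j : Fin (n+2)) :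
    pd (n+2) {(0 : E (n+2))}ᶜ (v5 n α) j x = α * x j / Qsum n x := by
  show fderivWithin ℝ (v5 n α) {(0 : E (n+2))}ᶜ x (EuclideanSpace.single j 1) = _
  rw [fderivWithin_of_isOpen isOpen_compl_singleton hx, (hasFDerivAt_v5 n α hx).fderiv]
  simp only [ContinuousLinearMap.smul_apply, ContinuousLinearMap.sum_apply, proj_single,
    smul_eq_mul]
  rw [Finset.sum_eq_single j]
  · simp; field_simp
  · intro i _ hij; simp [hij]
  · simp

lemma pd2_v5 (n : ℕ) (α : ℝ) {x : E (n+2)} (hx : x ≠ 0) (i j : Fin (n+2)) :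
    pd (n+2) {(0 : E (n+2))}ᶜ (fun y => pd (n+2) {(0 : E (n+2))}ᶜ (v5 n α) j y) i x
    = α * (if i = j then 1 else 0) / Qsum n x - 2 * α * x i * x j / (Qsum n x) ^ 2 := by
  show fderivWithin ℝ (fun y => fderivWithin ℝ (v5 n α) {(0 : E (n+2))}ᶜ y (EuclideanSpace.single j 1))
      {(0 : E (n+2))}ᶜ x (EuclideanSpace.single i 1) = _
  have hcong : fderivWithin ℝ (fun y => fderivWithin ℝ (v5 n α) {(0 : E (n+2))}ᶜ y (EuclideanSpace.single j 1))
      {(0 : E (n+2))}ᶜ x = fderivWithin ℝ (fun y => α * y j / Qsum n y) {(0 : E (n+2))}ᶜ x := by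
    apply fderivWithin_congr
    · intro y hy; exact pd_v5 n α hy j
    · exact pd_v5 n α hx j
  rw [hcong, fderivWithin_of_isOpen isOpen_compl_singleton hx]
  have hf : HasFDerivAt (fun y : E (n+2) => α * y j) (α • (EuclideanSpace.proj j : E (n+2) →L[ℝ] ℝ)) x :=
    ((EuclideanSpace.proj j : E (n+2) →L[ℝ] ℝ).hasFDerivAt).const_mul α
  have hg := hasFDerivAt_Q n x
  have hinv : HasFDerivAt (fun y : E (n+2) => (Qsum n y)⁻¹)
      ((-((Qsum n x) ^ 2)⁻¹) • (∑ i, (2 * x i) • (EuclideanSpace.proj i : E (n+2) →L[ℝ] ℝ))) x := by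
    have := (hasDerivAt_inv (Q_pos hx).ne').comp_hasFDerivAt x hg
    simp at this ⊢; exact this
  have hmul := hf.fun_mul hinv
  have heq : (fun y : E (n+2) => α * y j / Qsum n y) = fun y => (α * y j) * (Qsum n y)⁻¹ := by
    funext y; rw [div_eq_mul_inv]
  rw [heq, hmul.fderiv]
  simp only [ContinuousLinearMap.smul_apply, ContinuousLinearMap.add_apply,
    ContinuousLinearMap.sum_apply, proj_single, smul_eq_mul]
  rw [Finset.sum_eq_single i ?_ ?_]
  · by_cases h : i = j
    · subst h; simp only [if_pos rfl]; field_simp; rw [if_pos trivial]; ring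
    · have h' : j ≠ i := fun hji => h hji.symm
      simp only [if_neg h, if_neg h']; field_simp; rw [if_pos trivial]; ring
  · intro k _ hk; simp [hk]
  · simp

lemma mHess_v5 (n : ℕ) (α : ℝ) {x : E (n+2)} (hx : x ≠ 0) (i j : Fin (n+2)) :
    mHess (n+2) {(0 : E (n+2))}ᶜ (v5 n α) x i j
    = (α * (α + 2) / (2 * ‖x‖ ^ (2 * α + 2)))
        * (2 * x i * x j / Qsum n x - if i = j then (1:ℝ) else 0) := by
  have hr : (0:ℝ) < ‖x‖ := norm_pos_iff.mpr hx
  have hQ := Q_pos (n := n) hx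
  unfold mHess
  rw [pd_v5 n α hx i, pd_v5 n α hx j, pd2_v5 n α hx i j]
  have hsum : ∑ k, (pd (n+2) {(0 : E (n+2))}ᶜ (v5 n α) k x) ^ 2 = α ^ 2 / Qsum n x := by
    rw [Finset.sum_congr rfl (fun k _ => by rw [pd_v5 n α hx k])]
    have : ∑ k : Fin (n+2), (α * x k / Qsum n x) ^ 2
        = (α ^ 2 / (Qsum n x) ^ 2) * ∑ k : Fin (n+2), x k ^ 2 := by
      rw [Finset.mul_sum]
      exact Finset.sum_congr rfl fun k _ => by field_simp
    rw [this]
    show α ^ 2 / Qsum n x ^ 2 * Qsum n x = _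
    field_simp
  rw [hsum]
  have he : Real.exp (-2 * v5 n α x) = (‖x‖ ^ (2 * α))⁻¹ := by
    rw [Real.rpow_def_of_pos hr, ← Real.exp_neg]
    unfold v5
    ring_nf
  have hpow : ‖x‖ ^ (2 * α + 2) = ‖x‖ ^ (2 * α) * Qsum n x := by
    rw [Real.rpow_add hr, norm_sq_eq]
    congr 1
    rw [← Real.rpow_natCast ‖x‖ 2]
    norm_num
  rw [he, hpow]
  have h1 : (0:ℝ) < ‖x‖ ^ (2 * α) := Real.rpow_pos_of_pos hr _
  by_cases h : i = j
  · subst h; simp only [if_pos rfl]; field_simp; ring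
  · simp only [if_neg h]; field_simp; ring

end Calc


set_option maxHeartbeats 1000000 in
/-- Optimality of `λ* ∉ closure Γ` in the boundary-singularity lower-bound proposition
(Example 2.1 of the paper). -/
theorem stmt5 (n : ℕ) (α : ℝ) (hα : 0 < α) :
    (∀ x : E (n + 2), x ≠ 0 →
      0 < α * (α + 2) / (2 * ‖x‖ ^ (2 * α + 2)) ∧
      IsEigList (n + 2) (mHess (n + 2) {(0 : E (n + 2))}ᶜ (v5 n α) x)
        (fun i => α * (α + 2) / (2 * ‖x‖ ^ (2 * α + 2)) * lamStar (n + 2) i)) ∧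
    (∀ Γ : Set (Fin (n + 2) → ℝ), CondC (n + 2) Γ → lamStar (n + 2) ∈ closure Γ →
      ∀ x : E (n + 2), x ≠ 0 → ∃ ev : Fin (n + 2) → ℝ,
        IsEigList (n + 2) (mHess (n + 2) {(0 : E (n + 2))}ᶜ (v5 n α) x) ev ∧
        ev ∈ closure Γ) ∧
    (∀ x : E (n + 2), x ≠ 0 → x (lastIdx n) = 0 →
      pd (n + 2) {(0 : E (n + 2))}ᶜ (v5 n α) (lastIdx n) x = 0) ∧
    (∀ m : ℝ, ∃ᶠ x in 𝓝[{(0 : E (n + 2))}ᶜ] (0 : E (n + 2)), v5 n α x < m) := by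
  constructor
  · intro x hx
    have hr : (0:ℝ) < ‖x‖ := norm_pos_iff.mpr hx
    have hC : 0 < α * (α + 2) / (2 * ‖x‖ ^ (2 * α + 2)) := by
      apply div_pos
      · nlinarith
      · have := Real.rpow_pos_of_pos hr (2 * α + 2)
        linarith
    refine ⟨hC, ?_⟩
    exact charpoly_rank_one n (fun i => x i) _ (Qsum n x) rfl (Q_pos hx).ne'
      _ (fun i j => mHess_v5 n α hx i j)
  refine ⟨?_, ?_, ?_⟩
  · intro Γ hΓ hlam x hx
    have hr : (0:ℝ) < ‖x‖ := norm_pos_iff.mpr hx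
    set Cx := α * (α + 2) / (2 * ‖x‖ ^ (2 * α + 2)) with hCx
    have hCpos : 0 < Cx := by
      apply div_pos
      · nlinarith
      · have := Real.rpow_pos_of_pos hr (2 * α + 2)
        linarith
    refine ⟨fun i => Cx * lamStar (n+2) i, ?_, ?_⟩
    · exact charpoly_rank_one n (fun i => x i) _ (Qsum n x) rfl (Q_pos hx).ne'
        _ (fun i j => mHess_v5 n α hx i j)
    · obtain ⟨-, -, -, hscale, -, -⟩ := hΓ
      have hmaps : Set.MapsTo (fun y : Fin (n+2) → ℝ => Cx • y) Γ Γ :=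
        fun y hy => hscale Cx hCpos y hy
      have hcont : Continuous (fun y : Fin (n+2) → ℝ => Cx • y) :=
        continuous_id.const_smul Cx
      have := (hmaps.closure hcont) hlam
      convert this using 1
      rfl
  · intro x hx hlast
    rw [pd_v5 n α hx, hlast]
    simp
  · intro m
    rw [Filter.frequently_iff]
    intro U hU
    rw [mem_nhdsWithin] at hU
    obtain ⟨V, hVopen, hV0, hVU⟩ := hU
    obtain ⟨ε, hε, hball⟩ := Metric.isOpen_iff.mp hVopen 0 hV0
    set δ : ℝ := min (ε / 2) (Real.exp ((m - 1) / α)) with hδdef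
    have hδpos : 0 < δ := lt_min (by linarith) (Real.exp_pos _)
    set x : E (n+2) := EuclideanSpace.single (0 : Fin (n+2)) δ with hxdef
    have hxnorm : ‖x‖ = δ := by
      rw [hxdef, EuclideanSpace.norm_single, Real.norm_eq_abs, abs_of_pos hδpos]
    have hxne : x ≠ 0 := by
      intro h
      have : ‖x‖ = 0 := by rw [h, norm_zero]
      rw [hxnorm] at this
      exact hδpos.ne' this
    refine ⟨x, hVU ⟨hball ?_, hxne⟩, ?_⟩
    · rw [Metric.mem_ball, dist_zero_right, hxnorm]
      have : δ ≤ ε / 2 := min_le_left _ _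
      linarith
    · unfold v5
      rw [hxnorm]
      have hlog : Real.log δ ≤ (m - 1) / α := by
        calc Real.log δ ≤ Real.log (Real.exp ((m - 1) / α)) :=
              Real.log_le_log hδpos (min_le_right _ _)
          _ = (m - 1) / α := Real.log_exp _
      have : α * Real.log δ ≤ α * ((m - 1) / α) :=
        mul_le_mul_of_nonneg_left hlog hα.le
      rw [mul_div_cancel₀ _ hα.ne'] at this
      linarith
end
end

section
/- Let n ≥ 2, c < 0, and let Γ be a cone satisfying condition (C) with λ* := (1,−1,…,−1) ∈ Γ. Then there exists α₀ > 0 such that for every α ∈ (0, α₀) there is r > 0 for which the function v(x) := α·log|x| + 2c·xₙ − 10c²·|x|² satisfies λ(A[v]) ∈ Γ in B_r⁺ \ {0} and ∂v/∂xₙ ≤ c·e^v on ∂′B_r \ {0}, while liminf_{x→0} v(x) = −∞. -/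
/-!
For `x ≠ 0` the Möbius Hessian of `v = v6 n α c` is `e^{-2v}` times
`(2α/|x|⁴) x ⊗ x + ∇v ⊗ ∇v + μ I` with `μ = 20c² - α/|x|² - |∇v|²/2`. Put
`s = e^{-2v} (10c² - μ)`, which is positive as soon as `20c²|x|² < α`. Then `A[v] + s I` is
positive definite, so every eigenvalue exceeds `-s`, while the Rayleigh quotient at `x` exceeds
`s`, so some eigenvalue exceeds `s`. After a permutation the eigenvalue vector thus dominates
`s λ*` entrywise and lies in `Γ`. On the flat boundary `∂ₙv = 2c ≤ c e^v` since `v ≤ 0` in the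
unit ball, and `v → -∞` at the origin because of the term `α log|x|`.
-/

noncomputable section

open Filter Metric Polynomial MeasureTheory
open scoped Topology

open CLL

/-- The function of the second counterexample in Example 2.1 of the paper. -/
def v6 (n : ℕ) (α c : ℝ) (x : E (n + 2)) : ℝ :=
  α * Real.log ‖x‖ + 2 * c * x (lastIdx n) - 10 * c ^ 2 * ‖x‖ ^ 2

open Matrix

namespace Matrix.IsHermitian

variable {ι : Type*} [Fintype ι] [DecidableEq ι] {A : Matrix ι ι ℝ}

lemma lt_eigenvalues_of_lt_dotProduct_mulVec (hA : A.IsHermitian) {t : ℝ}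
    (h : ∀ ξ : ι → ℝ, ξ ≠ 0 → t * (ξ ⬝ᵥ ξ) < ξ ⬝ᵥ (A *ᵥ ξ)) (i : ι) :
    t < hA.eigenvalues i := by
  set w : ι → ℝ := ⇑(hA.eigenvectorBasis i)
  have hw : w ⬝ᵥ w = 1 := by
    have hnorm : ‖hA.eigenvectorBasis i‖ ^ 2 = 1 := by
      rw [hA.eigenvectorBasis.orthonormal.1 i, one_pow]
    rw [← real_inner_self_eq_norm_sq, EuclideanSpace.inner_eq_star_dotProduct] at hnorm
    simpa using hnorm
  have hw0 : w ≠ 0 := fun h0 => by simp [h0] at hw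
  simpa [hA.eigenvalues_eq i, hw, w] using h w hw0

lemma exists_lt_eigenvalues_of_lt_dotProduct_mulVec (hA : A.IsHermitian) {t : ℝ} (ξ : ι → ℝ)
    (h : t * (ξ ⬝ᵥ ξ) < ξ ⬝ᵥ (A *ᵥ ξ)) : ∃ i, t < hA.eigenvalues i := by
  by_contra! hle
  set U : Matrix ι ι ℝ := (hA.eigenvectorUnitary : Matrix ι ι ℝ)
  have hU : U * star U = 1 := mem_unitaryGroup_iff.mp hA.eigenvectorUnitary.2
  have hsub : t • 1 - A = U * diagonal (fun i => t - hA.eigenvalues i) * star U := by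
    have hdiag : diagonal (fun i => t - hA.eigenvalues i) = t • 1 - diagonal hA.eigenvalues := by
      ext i j
      by_cases hij : i = j <;> simp [hij]
    conv_lhs => rw [hA.spectral_theorem]
    rw [hdiag, Matrix.mul_sub, Matrix.sub_mul, mul_smul_comm, Matrix.mul_one, smul_mul_assoc, hU]
    simp [RCLike.ofReal_real_eq_id, Unitary.conjStarAlgAut_apply, U]
  have hpsd : (t • 1 - A).PosSemidef := by
    rw [hsub, star_eq_conjTranspose]
    exact (posSemidef_diagonal_iff.mpr fun i => sub_nonneg.mpr (hle i)).mul_mul_conjTranspose_same U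
  have := hpsd.dotProduct_mulVec_nonneg ξ
  simp only [sub_mulVec, smul_mulVec, one_mulVec, dotProduct_sub, dotProduct_smul, star_trivial,
    smul_eq_mul] at this
  linarith

end Matrix.IsHermitian

namespace CLL

section Cone

variable {d : ℕ} {Γ : Set (Fin d → ℝ)}

lemma CondC.smul_mem (hC : CondC d Γ) {t : ℝ} (ht : 0 < t) {lam : Fin d → ℝ} (hlam : lam ∈ Γ) :
    t • lam ∈ Γ :=
  hC.2.2.2.1 t ht lam hlam

lemma CondC.comp_perm_mem (hC : CondC d Γ) (σ : Equiv.Perm (Fin d)) {lam : Fin d → ℝ}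
    (hlam : lam ∈ Γ) : lam ∘ σ ∈ Γ :=
  hC.2.2.2.2.1 σ lam hlam

lemma CondC.mem_of_lt (hC : CondC d Γ) {lam μ : Fin d → ℝ} (hlam : lam ∈ Γ)
    (hlt : ∀ i, lam i < μ i) : μ ∈ Γ := by
  simpa using hC.2.2.2.2.2 lam hlam (μ - lam) fun i => sub_pos.mpr (hlt i)

lemma CondC.mem_of_forall_neg_lt_of_exists_lt [NeZero d] (hC : CondC d Γ)
    (hstar : lamStar d ∈ Γ) {μ : Fin d → ℝ} {s : ℝ} (hs : 0 < s) (hlow : ∀ i, -s < μ i)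
    (hhigh : ∃ i, s < μ i) : μ ∈ Γ := by
  obtain ⟨i₀, hi₀⟩ := hhigh
  set σ := Equiv.swap 0 i₀
  have hperm : μ ∘ σ ∈ Γ := by
    refine hC.mem_of_lt (hC.smul_mem hs hstar) fun i => ?_
    by_cases hi : i = 0
    · simpa [hi, lamStar, σ] using hi₀
    · simpa [lamStar, Fin.val_eq_zero_iff, hi] using hlow (σ i)
  simpa [Function.comp_def, σ, Equiv.swap_apply_self] using hC.comp_perm_mem σ hperm

end Cone

lemma dotProduct_ofLp_self {d : ℕ} (x : E d) : x.ofLp ⬝ᵥ x.ofLp = ‖x‖ ^ 2 := by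
  rw [← real_inner_self_eq_norm_sq, EuclideanSpace.inner_eq_star_dotProduct, star_trivial]

lemma pd_eq_of_hasFDerivAt {d : ℕ} {s : Set (E d)} (hs : IsOpen s) {v : E d → ℝ}
    {L : E d →L[ℝ] ℝ} {x : E d} (hx : x ∈ s) (hv : HasFDerivAt v L x) (i : Fin d) :
    pd d s v i x = L (EuclideanSpace.single i 1) := by
  rw [pd, fderivWithin_of_isOpen hs hx, hv.fderiv]

end CLL

open CLL

section V6

variable {n : ℕ} (α c : ℝ)

def gradV6 (x : E (n + 2)) : Fin (n + 2) → ℝ :=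
  (α / ‖x‖ ^ 2 - 20 * c ^ 2) • x.ofLp + Pi.single (lastIdx n) (2 * c)

lemma v6_eq_log_norm_sq (x : E (n + 2)) :
    v6 n α c x = α / 2 * Real.log (‖x‖ ^ 2) + 2 * c * x (lastIdx n) - 10 * c ^ 2 * ‖x‖ ^ 2 := by
  rw [v6, Real.log_pow]
  push_cast
  ring

lemma pd_v6 {x : E (n + 2)} (hx : x ≠ 0) (j : Fin (n + 2)) :
    pd (n + 2) {0}ᶜ (v6 n α c) j x = gradV6 α c x j := by
  have hN : ‖x‖ ^ 2 ≠ 0 := by positivity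
  have h := (((((hasStrictFDerivAt_norm_sq x).hasFDerivAt.log hN).const_mul (α / 2)).add
      ((EuclideanSpace.proj (lastIdx n)).hasFDerivAt.const_mul (2 * c))).sub
      ((hasStrictFDerivAt_norm_sq x).hasFDerivAt.const_mul (10 * c ^ 2))).congr_of_eventuallyEq
      (.of_forall (v6_eq_log_norm_sq α c))
  rw [pd_eq_of_hasFDerivAt isOpen_compl_singleton hx h, gradV6]
  simp only [_root_.sub_apply, _root_.add_apply, _root_.smul_apply, coe_innerSL_apply,
    EuclideanSpace.inner_single_right, Real.ringHom_apply, one_mul, nsmul_eq_mul, Nat.cast_ofNat,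
    smul_eq_mul, PiLp.proj_apply, PiLp.single_apply, @eq_comm _ (lastIdx n), mul_ite, mul_one,
    mul_zero, Pi.add_apply, Pi.smul_apply, Pi.single_apply]
  ring

lemma pd_pd_v6 {x : E (n + 2)} (hx : x ≠ 0) (i j : Fin (n + 2)) :
    pd (n + 2) {0}ᶜ (fun y => pd (n + 2) {0}ᶜ (v6 n α c) j y) i x =
      α * ((if i = j then 1 else 0) / ‖x‖ ^ 2 - 2 * x i * x j / ‖x‖ ^ 4)
        - 20 * c ^ 2 * (if i = j then 1 else 0) := by
  have hN : ‖x‖ ^ 2 ≠ 0 := by positivity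
  have hpd : (fun y => pd (n + 2) {0}ᶜ (v6 n α c) j y) =ᶠ[𝓝 x]
      fun y => (α / ‖y‖ ^ 2 - 20 * c ^ 2) * y j + if j = lastIdx n then 2 * c else 0 := by
    filter_upwards [isOpen_compl_singleton.mem_nhds hx] with y hy
    simp [pd_v6 α c hy, gradV6, Pi.single_apply]
  have h := (((((hasDerivAt_inv hN).comp_hasFDerivAt x
      (hasStrictFDerivAt_norm_sq x).hasFDerivAt).const_mul α).sub_const
      (20 * c ^ 2)).mul ((EuclideanSpace.proj j).hasFDerivAt)).add_const
      (if j = lastIdx n then 2 * c else 0) |>.congr_of_eventuallyEq hpd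
  rw [pd_eq_of_hasFDerivAt isOpen_compl_singleton hx h]
  simp only [Function.comp_apply, PiLp.proj_apply, neg_smul, smul_neg, _root_.add_apply,
    _root_.smul_apply, PiLp.single_apply, @eq_comm _ j i, smul_eq_mul, mul_ite, mul_one, mul_zero,
    _root_.neg_apply, coe_innerSL_apply, EuclideanSpace.inner_single_right, Real.ringHom_apply,
    one_mul, nsmul_eq_mul, Nat.cast_ofNat]
  split_ifs <;> field_simp <;> ring

lemma mHess_v6 {x : E (n + 2)} (hx : x ≠ 0) :
    mHess (n + 2) {0}ᶜ (v6 n α c) x = Real.exp (-2 * v6 n α c x) •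
      ((2 * α / ‖x‖ ^ 4) • vecMulVec x.ofLp x.ofLp + vecMulVec (gradV6 α c x) (gradV6 α c x)
        + (20 * c ^ 2 - α / ‖x‖ ^ 2 - (gradV6 α c x ⬝ᵥ gradV6 α c x) / 2) • 1) := by
  ext i j
  simp only [mHess, pd_pd_v6 α c hx, pd_v6 α c hx, Matrix.smul_apply, Matrix.add_apply,
    vecMulVec_apply, one_apply, dotProduct, smul_eq_mul, sq]
  split_ifs <;> ring

lemma isHermitian_mHess_v6 {x : E (n + 2)} (hx : x ≠ 0) :
    (mHess (n + 2) {0}ᶜ (v6 n α c) x).IsHermitian := by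
  have hvv (a : Fin (n + 2) → ℝ) : (vecMulVec a a).IsHermitian := by
    simpa using (posSemidef_vecMulVec_self_star a).isHermitian
  rw [mHess_v6 α c hx]
  exact ((((hvv _).smul (.all _)).add (hvv _)).add (isHermitian_one.smul (.all _))).smul (.all _)

lemma dotProduct_mHess_v6_mulVec {x : E (n + 2)} (hx : x ≠ 0) (ξ : Fin (n + 2) → ℝ) :
    ξ ⬝ᵥ (mHess (n + 2) {0}ᶜ (v6 n α c) x *ᵥ ξ) = Real.exp (-2 * v6 n α c x) *
      (2 * α / ‖x‖ ^ 4 * (ξ ⬝ᵥ x.ofLp) ^ 2 + (ξ ⬝ᵥ gradV6 α c x) ^ 2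
        + (20 * c ^ 2 - α / ‖x‖ ^ 2 - (gradV6 α c x ⬝ᵥ gradV6 α c x) / 2) * (ξ ⬝ᵥ ξ)) := by
  simp only [mHess_v6 α c hx, smul_mulVec, add_mulVec, vecMulVec_mulVec, one_mulVec,
    op_smul_eq_smul, dotProduct_add, dotProduct_smul, smul_eq_mul, dotProduct_comm _ ξ]
  ring

lemma gradV6_dotProduct_ofLp (x : E (n + 2)) :
    gradV6 α c x ⬝ᵥ x.ofLp = (α / ‖x‖ ^ 2 - 20 * c ^ 2) * ‖x‖ ^ 2 + 2 * c * x (lastIdx n) := by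
  simp [gradV6, add_dotProduct, smul_dotProduct, single_dotProduct, dotProduct_ofLp_self]

lemma gradV6_dotProduct_self (x : E (n + 2)) :
    gradV6 α c x ⬝ᵥ gradV6 α c x = (α / ‖x‖ ^ 2 - 20 * c ^ 2) ^ 2 * ‖x‖ ^ 2
      + 4 * c * (α / ‖x‖ ^ 2 - 20 * c ^ 2) * x (lastIdx n) + 4 * c ^ 2 := by
  simp only [gradV6, add_dotProduct, dotProduct_add, smul_dotProduct, dotProduct_smul,
    single_dotProduct, dotProduct_single, dotProduct_ofLp_self, smul_eq_mul, Pi.add_apply,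
    Pi.smul_apply, Pi.single_eq_same]
  ring

lemma exists_dotProduct_mHess_v6_bounds (hc : c ≠ 0) {x : E (n + 2)} (hx : x ≠ 0)
    (hsmall : 20 * c ^ 2 * ‖x‖ ^ 2 < α) : ∃ s > 0,
      (∀ ξ ≠ 0, -s * (ξ ⬝ᵥ ξ) < ξ ⬝ᵥ (mHess (n + 2) {0}ᶜ (v6 n α c) x *ᵥ ξ)) ∧
      s * (x.ofLp ⬝ᵥ x.ofLp) < x.ofLp ⬝ᵥ (mHess (n + 2) {0}ᶜ (v6 n α c) x *ᵥ x.ofLp) := by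
  have he : 0 < Real.exp (-2 * v6 n α c x) := Real.exp_pos _
  have hN : 0 < ‖x‖ ^ 2 := by positivity
  have hc2 : 0 < c ^ 2 := by positivity
  have hα0 : 0 < α := lt_of_le_of_lt (by positivity) hsmall
  have hα : 20 * c ^ 2 < α / ‖x‖ ^ 2 := by rwa [lt_div_iff₀ hN]
  have hgg : 0 ≤ gradV6 α c x ⬝ᵥ gradV6 α c x := by
    simpa using dotProduct_star_self_nonneg (gradV6 α c x)
  refine ⟨Real.exp (-2 * v6 n α c x) *
    (α / ‖x‖ ^ 2 + (gradV6 α c x ⬝ᵥ gradV6 α c x) / 2 - 10 * c ^ 2), by nlinarith,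
    fun ξ hξ => ?_, ?_⟩
  · have hξ : 0 < ξ ⬝ᵥ ξ := by simpa using dotProduct_self_star_pos_iff.mpr hξ
    rw [dotProduct_mHess_v6_mulVec α c hx]
    have ha : 0 ≤ 2 * α / ‖x‖ ^ 4 := by positivity
    nlinarith [mul_nonneg ha (sq_nonneg (ξ ⬝ᵥ x.ofLp)), sq_nonneg (ξ ⬝ᵥ gradV6 α c x),
      mul_pos he (mul_pos hc2 hξ)]
  · rw [dotProduct_mHess_v6_mulVec α c hx, dotProduct_comm x.ofLp (gradV6 α c x),
      gradV6_dotProduct_ofLp, gradV6_dotProduct_self, dotProduct_ofLp_self]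
    refine lt_of_sub_pos ((mul_pos he (show 0 < 4 * c ^ 2 * x (lastIdx n) ^ 2 + 26 * c ^ 2 * ‖x‖ ^ 2
      by positivity)).trans_eq ?_)
    field_simp
    ring

lemma exists_isEigList_mHess_v6_mem {Γ : Set (Fin (n + 2) → ℝ)} (hC : CondC (n + 2) Γ)
    (hstar : lamStar (n + 2) ∈ Γ) (hc : c ≠ 0) {x : E (n + 2)} (hx : x ≠ 0)
    (hsmall : 20 * c ^ 2 * ‖x‖ ^ 2 < α) :
    ∃ ev, IsEigList (n + 2) (mHess (n + 2) {0}ᶜ (v6 n α c) x) ev ∧ ev ∈ Γ := by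
  have hA := isHermitian_mHess_v6 α c hx
  obtain ⟨s, hs, hlow, hhigh⟩ := exists_dotProduct_mHess_v6_bounds α c hc hx hsmall
  exact ⟨hA.eigenvalues, hA.charpoly_eq, hC.mem_of_forall_neg_lt_of_exists_lt hstar hs
    (hA.lt_eigenvalues_of_lt_dotProduct_mulVec hlow)
    (hA.exists_lt_eigenvalues_of_lt_dotProduct_mulVec _ hhigh)⟩

lemma pd_v6_lastIdx_le_of_lastIdx_eq_zero (hc : c < 0) (hα : 0 ≤ α) {x : E (n + 2)} (hx : x ≠ 0)
    (hx1 : ‖x‖ ≤ 1) (hxn : x (lastIdx n) = 0) :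
    pd (n + 2) {0}ᶜ (v6 n α c) (lastIdx n) x ≤ c * Real.exp (v6 n α c x) := by
  have hv : v6 n α c x ≤ 0 := by
    have hlog := Real.log_nonpos (norm_nonneg x) hx1
    rw [v6, hxn]
    nlinarith [sq_nonneg c, sq_nonneg ‖x‖]
  have hexp := Real.exp_le_one_iff.mpr hv
  rw [pd_v6 α c hx]
  simp only [gradV6, Pi.add_apply, Pi.smul_apply, Pi.single_eq_same, smul_eq_mul]
  rw [show x.ofLp (lastIdx n) = 0 from hxn]
  nlinarith [Real.exp_pos (v6 n α c x)]

lemma tendsto_v6_atBot (hα : 0 < α) : Tendsto (v6 n α c) (𝓝[≠] 0) atBot := by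
  have hlog : Tendsto (fun x : E (n + 2) => α * Real.log ‖x‖) (𝓝[≠] 0) atBot :=
    (Real.tendsto_log_nhdsGT_zero.comp tendsto_norm_nhdsNE_zero).const_mul_atBot hα
  have hrest : Tendsto (fun x : E (n + 2) => 2 * c * x (lastIdx n) - 10 * c ^ 2 * ‖x‖ ^ 2)
      (𝓝[≠] 0) (𝓝 0) := by
    apply tendsto_nhdsWithin_of_tendsto_nhds
    have : Continuous fun x : E (n + 2) => 2 * c * x (lastIdx n) - 10 * c ^ 2 * ‖x‖ ^ 2 := by
      fun_prop
    simpa using this.tendsto 0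
  exact (hlog.atBot_add hrest).congr fun x => by rw [v6]; ring

end V6

lemma zero_mem_closure_Bplus {n : ℕ} {r : ℝ} (hr : 0 < r) :
    (0 : E (n + 2)) ∈ closure (Bplus n r) := by
  rw [Metric.mem_closure_iff]
  intro ε hε
  set δ := min ε r / 2
  have hδ : 0 < δ := by positivity
  have hδε : δ < min ε r := half_lt_self (lt_min hε hr)
  refine ⟨EuclideanSpace.single (lastIdx n) δ, ⟨?_, ?_⟩, ?_⟩
  · simpa [abs_of_pos hδ] using hδε.trans_le (min_le_right _ _)
  · simpa [upperH] using hδ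
  · simpa [abs_of_pos hδ] using hδε.trans_le (min_le_left _ _)

/-- Counterexamples with boundary condition `∂v/∂xₙ ≤ c e^v` for `c < 0`
(Example 2.1 of the paper). -/
theorem stmt6 (n : ℕ) (c : ℝ) (hc : c < 0) (Γ : Set (Fin (n + 2) → ℝ))
    (hC : CondC (n + 2) Γ) (hstar : lamStar (n + 2) ∈ Γ) :
    ∃ α₀ > (0 : ℝ), ∀ α : ℝ, 0 < α → α < α₀ → ∃ r > (0 : ℝ),
      (∀ x ∈ Bplus n r, x ≠ 0 → ∃ ev : Fin (n + 2) → ℝ,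
        IsEigList (n + 2) (mHess (n + 2) {(0 : E (n + 2))}ᶜ (v6 n α c) x) ev ∧ ev ∈ Γ) ∧
      (∀ x : E (n + 2), ‖x‖ < r → x (lastIdx n) = 0 → x ≠ 0 →
        pd (n + 2) {(0 : E (n + 2))}ᶜ (v6 n α c) (lastIdx n) x
          ≤ c * Real.exp (v6 n α c x)) ∧
      (∀ m : ℝ, ∃ᶠ x in 𝓝[Bplus n r] (0 : E (n + 2)), v6 n α c x < m) := by
  have hc2 : 0 < 20 * c ^ 2 := mul_pos (by norm_num) (sq_pos_of_neg hc)
  refine ⟨1, one_pos, fun α hα _ => ?_⟩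
  have hr : 0 < min 1 (α / (20 * c ^ 2)) := lt_min one_pos (div_pos hα hc2)
  set r := min 1 (α / (20 * c ^ 2))
  refine ⟨r, hr, ?_, ?_, ?_⟩
  · rintro x ⟨hxr, -⟩ hx
    have hxr : ‖x‖ < r := mem_ball_zero_iff.mp hxr
    have hsq : ‖x‖ ^ 2 ≤ ‖x‖ := by nlinarith [norm_nonneg x, min_le_left 1 (α / (20 * c ^ 2))]
    have hsmall : 20 * c ^ 2 * ‖x‖ ^ 2 < α := by
      rw [← lt_div_iff₀' hc2]
      exact hsq.trans_lt (hxr.trans_le (min_le_right _ _))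
    exact exists_isEigList_mHess_v6_mem α c hC hstar hc.ne hx hsmall
  · exact fun x hxr hxn hx =>
      pd_v6_lastIdx_le_of_lastIdx_eq_zero α c hc hα.le hx (hxr.le.trans (min_le_left _ _)) hxn
  · intro m
    have := mem_closure_iff_nhdsWithin_neBot.mp (zero_mem_closure_Bplus (n := n) hr)
    have hle : 𝓝[Bplus n r] (0 : E (n + 2)) ≤ 𝓝[≠] 0 :=
      nhdsWithin_mono _ <| by rintro x ⟨-, hx⟩ rfl; simp [upperH] at hx
    exact (((tendsto_v6_atBot α c hα).mono_left hle).eventually (eventually_lt_atBot m)).frequently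
end
end

section
/- Let n ≥ 2 and let v be a C¹ function defined in a neighborhood of 0 in closure(ℝⁿ₊) with tangential gradient q := ∇_T v(0) = (∂₁v(0), …, ∂_{n−1}v(0)) ≠ 0. For any λ ∈ ℝ \ {0} and any O′ ∈ O(n−1), set O := diag(O′, 1) and x̄ := (λ²/2)·Oᵀ·(qᵀ, 0)ᵀ (a nonzero point of ∂ℝⁿ₊), and define ψ(x) := O·( λ²(x − x̄)/|x − x̄|² + λ²·x̄/|x̄|² ). Then ψ(0) = 0, ψ maps ℝⁿ₊ onto ℝⁿ₊, and the transformed function v^ψ(x) := v(ψ(x)) + (1/n)·log|det Dψ(x)| satisfies ∇_T v^ψ(0) = 0. -/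
noncomputable section

open Filter Metric Polynomial MeasureTheory
open scoped Topology

/-!
The map `ψ` is `O ∘ (· + k) ∘ ι`, where `ι` is the inversion in the sphere of radius `|λ|`
about `x̄` and `k = λ² x̄ / |x̄|² - x̄`. Since `x̄` and `k` lie on `∂ℝⁿ₊` and `O` fixes the last
coordinate, `(ψ x)ₙ = λ² xₙ / |x - x̄|²`, so the bijection `ψ` preserves `ℝⁿ₊`. The differential
of `ψ` at `x` is `O` composed with `λ² / |x - x̄|²` times the reflection in `(x - x̄)ᗮ`, so
`(1/n) log |det Dψ(x)| = log λ² - log |x - x̄|²`.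

At `0` the reflection `R` is the one in `x̄ᗮ`, and `x̄` was chosen so that
`Dv(0) (O w) = (2/λ²) ⟨x̄, w⟩` for every tangential `w`. For a tangential direction `e` the chain
rule therefore gives `∂ₑ (v ∘ ψ)(0) = (λ²/|x̄|²) (2/λ²) ⟨x̄, R e⟩ = -2 ⟨x̄, e⟩ / |x̄|²`, which is
cancelled by `∂ₑ (-log |x - x̄|²)(0) = 2 ⟨x̄, e⟩ / |x̄|²`.
-/

open Set EuclideanGeometry Matrix
open scoped RealInnerProductSpace

namespace CLL

section HalfSpace

variable {n : ℕ}

theorem isOpen_upperH : IsOpen (upperH n) :=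
  isOpen_lt continuous_const (EuclideanSpace.proj _).continuous

theorem closure_upperH : closure (upperH n) = {x | 0 ≤ x (lastIdx n)} := by
  have hproj : IsOpenMap (EuclideanSpace.proj (lastIdx n) : E (n + 2) →L[ℝ] ℝ) :=
    LinearMap.isOpenMap_of_finiteDimensional _ fun t =>
      ⟨EuclideanSpace.single (lastIdx n) t, by simp⟩
  have h := hproj.preimage_closure_eq_closure_preimage (EuclideanSpace.proj _).continuous (Ioi 0)
  rw [closure_Ioi] at h
  exact h.symm

theorem zero_mem_closure_upperH : (0 : E (n + 2)) ∈ closure (upperH n) := by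
  simp [closure_upperH]

theorem uniqueDiffOn_closure_upperH : UniqueDiffOn ℝ (closure (upperH n)) := by
  have hconv : Convex ℝ (upperH n) :=
    convex_halfSpace_gt (EuclideanSpace.proj (lastIdx n) : E (n + 2) →L[ℝ] ℝ).isLinear 0
  refine uniqueDiffOn_convex hconv.closure (Nonempty.mono
    (isOpen_upperH.subset_interior_iff.2 subset_closure) ⟨EuclideanSpace.single (lastIdx n) 1, ?_⟩)
  simp [upperH]

end HalfSpace

theorem transpose_mulVec_ne_zero {d : ℕ} {O : Matrix (Fin d) (Fin d) ℝ}
    (hO : O ∈ orthogonalGroup (Fin d) ℝ) {q : Fin d → ℝ} (hq : q ≠ 0) : Oᵀ *ᵥ q ≠ 0 := by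
  intro h
  rw [← one_mulVec q, ← (mem_orthogonalGroup_iff _ _).1 hO, ← mulVec_mulVec, h, mulVec_zero] at hq
  exact hq rfl

section BlockMatrix

variable {n : ℕ} (O' : Matrix (Fin (n + 1)) (Fin (n + 1)) ℝ)

def blockDiagOne : Matrix (Fin (n + 2)) (Fin (n + 2)) ℝ :=
  reindex (finSumFinEquiv : Fin (n + 1) ⊕ Fin 1 ≃ Fin (n + 2))
    (finSumFinEquiv : Fin (n + 1) ⊕ Fin 1 ≃ Fin (n + 2))
    (fromBlocks O' 0 0 (1 : Matrix (Fin 1) (Fin 1) ℝ))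

theorem transpose_blockDiagOne : (blockDiagOne O')ᵀ = blockDiagOne O'ᵀ := by
  simp [blockDiagOne, fromBlocks_transpose]

theorem blockDiagOne_mulVec_last (y : Fin (n + 2) → ℝ) :
    (blockDiagOne O' *ᵥ y) (lastIdx n) = y (lastIdx n) := by
  simp [blockDiagOne, lastIdx, reindex_apply, submatrix_mulVec_equiv, fromBlocks_mulVec,
    finSumFinEquiv_symm_last]
  rfl

theorem blockDiagOne_mem_orthogonalGroup (hO' : O' ∈ orthogonalGroup (Fin (n + 1)) ℝ) :
    blockDiagOne O' ∈ orthogonalGroup (Fin (n + 2)) ℝ := by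
  rw [mem_orthogonalGroup_iff] at hO' ⊢
  simp [blockDiagOne, reindex_apply, submatrix_mul_equiv, fromBlocks_transpose,
    fromBlocks_multiply, hO', fromBlocks_one]

end BlockMatrix

theorem reflection_orthogonal_singleton_apply {F : Type*} [NormedAddCommGroup F]
    [InnerProductSpace ℝ F] (u v : F) :
    (ℝ ∙ u)ᗮ.reflection v = v - (2 * ⟪u, v⟫ / ‖u‖ ^ 2) • u := by
  rw [Submodule.reflection_orthogonal_apply, Submodule.reflection_singleton_apply]
  simp only [RCLike.ofReal_real_eq_id, id_eq]
  rw [neg_sub, two_smul, ← add_smul, ← two_mul, mul_div_assoc]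

theorem hasFDerivAt_log_norm_sub_sq {F : Type*} [NormedAddCommGroup F] [InnerProductSpace ℝ F]
    {c x : F} (hx : x ≠ c) :
    HasFDerivAt (fun y => Real.log (‖y - c‖ ^ 2)) ((2 / ‖x - c‖ ^ 2) • innerSL ℝ (x - c)) x := by
  have hpos : ‖x - c‖ ^ 2 ≠ 0 := by positivity [sub_ne_zero.2 hx]
  refine (((hasFDerivAt_id x).sub_const c).norm_sq.log hpos).congr_fderiv ?_
  ext y
  simp
  ring

section Moebius

variable {d : ℕ} (O : Matrix (Fin d) (Fin d) ℝ) (lam : ℝ) (c : E d)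

def moebius (x : E d) : E d :=
  toEuclideanCLM (𝕜 := ℝ) O ((lam ^ 2 / ‖x - c‖ ^ 2) • (x - c) + (lam ^ 2 / ‖c‖ ^ 2) • c)

theorem moebius_zero : moebius O lam c 0 = 0 := by
  simp [moebius]

theorem moebius_apply (x : E d) (i : Fin d) :
    moebius O lam c x i =
      ∑ j, O i j * (lam ^ 2 * (x j - c j) / ‖x - c‖ ^ 2 + lam ^ 2 * c j / ‖c‖ ^ 2) := by
  simp only [moebius, ofLp_toEuclideanCLM, mulVec, dotProduct, WithLp.ofLp_add, WithLp.ofLp_smul,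
    WithLp.ofLp_sub, Pi.add_apply, Pi.smul_apply, Pi.sub_apply, smul_eq_mul]
  exact Finset.sum_congr rfl fun j _ => by ring

theorem moebius_eq_inversion : moebius O lam c =
    fun x => toEuclideanCLM (𝕜 := ℝ) O (inversion c |lam| x + ((lam ^ 2 / ‖c‖ ^ 2) • c - c)) := by
  funext x
  rw [moebius, inversion, div_pow, sq_abs, dist_eq_norm, vsub_eq_sub, vadd_eq_add]
  abel_nf

variable {O lam c}

theorem moebius_surjective (hO : O ∈ orthogonalGroup (Fin d) ℝ) (hlam : lam ≠ 0) :
    Function.Surjective (moebius O lam c) := by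
  have hT : Function.Surjective (toEuclideanCLM (𝕜 := ℝ) O) := fun y =>
    ⟨toEuclideanCLM (𝕜 := ℝ) Oᵀ y, by
      change (toEuclideanCLM (𝕜 := ℝ) O * toEuclideanCLM (𝕜 := ℝ) Oᵀ) y = y
      rw [← map_mul, (mem_orthogonalGroup_iff _ _).1 hO, map_one]
      rfl⟩
  rw [moebius_eq_inversion]
  exact hT.comp ((add_right_surjective _).comp (inversion_surjective c (abs_ne_zero.2 hlam)))

theorem hasFDerivAt_moebius {x : E d} (hx : x ≠ c) :
    HasFDerivAt (moebius O lam c) (toEuclideanCLM (𝕜 := ℝ) O ∘L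
      ((|lam| / dist x c) ^ 2 • ((ℝ ∙ (x - c))ᗮ.reflection : E d →L[ℝ] E d))) x := by
  rw [moebius_eq_inversion]
  exact (toEuclideanCLM (𝕜 := ℝ) O).hasFDerivAt.comp x ((hasFDerivAt_inversion hx).add_const _)

theorem abs_det_fderiv_moebius (hO : O ∈ orthogonalGroup (Fin d) ℝ) {x : E d} (hx : x ≠ c) :
    |LinearMap.det (fderiv ℝ (moebius O lam c) x : E d →ₗ[ℝ] E d)| =
      (lam ^ 2 / ‖x - c‖ ^ 2) ^ d := by
  have hdetO : |LinearMap.det (toEuclideanCLM (𝕜 := ℝ) O : E d →ₗ[ℝ] E d)| = 1 := by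
    have h := congrArg det ((mem_orthogonalGroup_iff _ _).1 hO)
    rw [det_mul, det_transpose, det_one] at h
    rw [coe_toEuclideanCLM_eq_toEuclideanLin, toEuclideanLin_eq_toLin_orthonormal,
      LinearMap.det_toLin]
    rcases mul_self_eq_one_iff.1 h with h | h <;> simp [h]
  have hdetR (K : Submodule ℝ (E d)) :
      |LinearMap.det (K.reflection : E d →L[ℝ] E d).toLinearMap| = 1 := by
    rw [show (K.reflection : E d →L[ℝ] E d).toLinearMap = K.reflection.toLinearMap from rfl,
      Submodule.det_reflection]
    simp
  rw [(hasFDerivAt_moebius hx).fderiv, ContinuousLinearMap.toLinearMap_comp, LinearMap.det_comp,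
    ContinuousLinearMap.toLinearMap_smul, LinearMap.det_smul, abs_mul, abs_mul, hdetO, hdetR,
    finrank_euclideanSpace_fin, div_pow, sq_abs, dist_eq_norm, abs_pow, abs_div, abs_sq, abs_sq]
  ring

theorem log_abs_det_fderiv_moebius (hO : O ∈ orthogonalGroup (Fin d) ℝ) (hlam : lam ≠ 0)
    {x : E d} (hx : x ≠ c) :
    Real.log |LinearMap.det (fderiv ℝ (moebius O lam c) x : E d →ₗ[ℝ] E d)| =
      d * (Real.log (lam ^ 2) - Real.log (‖x - c‖ ^ 2)) := by
  have hxc : x - c ≠ 0 := sub_ne_zero.2 hx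
  rw [abs_det_fderiv_moebius hO hx, Real.log_pow, Real.log_div (by positivity) (by positivity)]

end Moebius

section MoebiusHalfSpace

variable {n : ℕ} {O : Matrix (Fin (n + 2)) (Fin (n + 2)) ℝ} {lam : ℝ} {c : E (n + 2)}

theorem moebius_apply_last (hlast : ∀ y, (O *ᵥ y) (lastIdx n) = y (lastIdx n))
    (hc : c (lastIdx n) = 0) (x : E (n + 2)) :
    moebius O lam c x (lastIdx n) = lam ^ 2 / ‖x - c‖ ^ 2 * x (lastIdx n) := by
  simp [moebius, hlast, hc]

theorem mapsTo_moebius_closure_upperH (hlast : ∀ y, (O *ᵥ y) (lastIdx n) = y (lastIdx n))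
    (hc : c (lastIdx n) = 0) :
    MapsTo (moebius O lam c) (closure (upperH n)) (closure (upperH n)) := by
  intro x hx
  rw [closure_upperH] at hx ⊢
  change 0 ≤ moebius O lam c x (lastIdx n)
  rw [moebius_apply_last hlast hc]
  exact mul_nonneg (by positivity) hx

theorem moebius_image_upperH (hO : O ∈ orthogonalGroup (Fin (n + 2)) ℝ)
    (hlast : ∀ y, (O *ᵥ y) (lastIdx n) = y (lastIdx n)) (hc : c (lastIdx n) = 0)
    (hlam : lam ≠ 0) : moebius O lam c '' upperH n = upperH n := by
  refine Subset.antisymm ?_ fun y hy => ?_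
  · rintro _ ⟨x, hx, rfl⟩
    have hxc : x - c ≠ 0 := sub_ne_zero.2 fun h => by simp [upperH, h, hc] at hx
    change 0 < moebius O lam c x (lastIdx n)
    rw [moebius_apply_last hlast hc]
    exact mul_pos (by positivity) hx
  · obtain ⟨x, rfl⟩ := moebius_surjective (c := c) hO hlam y
    refine ⟨x, ?_, rfl⟩
    have hy' : 0 < lam ^ 2 / ‖x - c‖ ^ 2 * x (lastIdx n) := by
      rw [← moebius_apply_last hlast hc]
      exact hy
    exact pos_of_mul_pos_right hy' (by positivity)

end MoebiusHalfSpace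

section Gradient

variable {n : ℕ}

def tangentialPart (L : E (n + 2) →L[ℝ] ℝ) : Fin (n + 2) → ℝ :=
  fun k => if k = Fin.last (n + 1) then 0 else L (EuclideanSpace.single k 1)

theorem apply_eq_tangentialPart_dotProduct (L : E (n + 2) →L[ℝ] ℝ) {y : E (n + 2)}
    (hy : y (lastIdx n) = 0) : L y = tangentialPart L ⬝ᵥ y.ofLp := by
  conv_lhs => rw [← (EuclideanSpace.basisFun _ ℝ).sum_repr y]
  simp only [map_sum, map_smul, EuclideanSpace.basisFun_repr, EuclideanSpace.basisFun_apply,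
    smul_eq_mul, dotProduct, tangentialPart]
  refine Finset.sum_congr rfl fun k _ => ?_
  split_ifs with hk
  · subst hk
    simp [show y (Fin.last (n + 1)) = 0 from hy]
  · ring

variable {O : Matrix (Fin (n + 2)) (Fin (n + 2)) ℝ} {lam : ℝ} {c : E (n + 2)}
  {L : E (n + 2) →L[ℝ] ℝ}

theorem tangentialPart_ne_zero
    (h : ∃ i : Fin (n + 1), L (EuclideanSpace.single i.castSucc 1) ≠ 0) : tangentialPart L ≠ 0 := by
  obtain ⟨i, hi⟩ := h
  intro h0
  have := congrFun h0 i.castSucc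
  simp [tangentialPart, (Fin.castSucc_lt_last i).ne, hi] at this

theorem apply_toEuclideanCLM_eq_inner (hlast : ∀ y, (O *ᵥ y) (lastIdx n) = y (lastIdx n))
    (hlam : lam ≠ 0) (hcdef : c.ofLp = (lam ^ 2 / 2) • (Oᵀ *ᵥ tangentialPart L)) {w : E (n + 2)}
    (hw : w (lastIdx n) = 0) : L (toEuclideanCLM (𝕜 := ℝ) O w) = 2 / lam ^ 2 * ⟪c, w⟫ := by
  rw [apply_eq_tangentialPart_dotProduct L (by rw [ofLp_toEuclideanCLM, hlast, hw]),
    ofLp_toEuclideanCLM, dotProduct_mulVec, ← mulVec_transpose,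
    EuclideanSpace.inner_eq_star_dotProduct, hcdef, star_trivial, dotProduct_smul,
    dotProduct_comm, smul_eq_mul]
  field_simp

theorem apply_fderiv_moebius_zero (hlast : ∀ y, (O *ᵥ y) (lastIdx n) = y (lastIdx n))
    (hlam : lam ≠ 0) (hc0 : c ≠ 0) (hc : c (lastIdx n) = 0)
    (hcdef : c.ofLp = (lam ^ 2 / 2) • (Oᵀ *ᵥ tangentialPart L)) {e : E (n + 2)}
    (he : e (lastIdx n) = 0) :
    L (fderiv ℝ (moebius O lam c) 0 e) = -(2 * ⟪c, e⟫ / ‖c‖ ^ 2) := by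
  rw [(hasFDerivAt_moebius hc0.symm).fderiv, ContinuousLinearMap.comp_apply,
    _root_.smul_apply, map_smul, map_smul, LinearIsometryEquiv.coe_coe'',
    reflection_orthogonal_singleton_apply,
    apply_toEuclideanCLM_eq_inner hlast hlam hcdef (by simp [he, hc])]
  simp only [zero_sub, inner_neg_left, norm_neg, dist_zero_left, inner_sub_right, inner_smul_right,
    inner_neg_right, real_inner_self_eq_norm_sq, smul_eq_mul, div_pow, sq_abs]
  field_simp
  ring

theorem fderivWithin_moebius_add_log_tangential_eq_zero {v : E (n + 2) → ℝ}
    (hlast : ∀ y, (O *ᵥ y) (lastIdx n) = y (lastIdx n)) (hlam : lam ≠ 0) (hc0 : c ≠ 0)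
    (hc : c (lastIdx n) = 0) (hcdef : c.ofLp = (lam ^ 2 / 2) • (Oᵀ *ᵥ tangentialPart L))
    (hv : HasFDerivWithinAt v L (closure (upperH n)) 0) (i : Fin (n + 1)) :
    fderivWithin ℝ (fun x => v (moebius O lam c x) + (Real.log (lam ^ 2) - Real.log (‖x - c‖ ^ 2)))
      (closure (upperH n)) 0 (EuclideanSpace.single i.castSucc 1) = 0 := by
  have hψ := (hasFDerivAt_moebius (O := O) (lam := lam) hc0.symm).differentiableAt.hasFDerivAt
  rw [← moebius_zero O lam c] at hv
  have hcomp : HasFDerivWithinAt (fun x => v (moebius O lam c x))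
      (L ∘L fderiv ℝ (moebius O lam c) 0) (closure (upperH n)) 0 :=
    hv.comp_of_tendsto 0 hψ.hasFDerivWithinAt (hψ.continuousAt.continuousWithinAt.tendsto_nhdsWithin
      (mapsTo_moebius_closure_upperH hlast hc))
  have hlog := ((hasFDerivAt_log_norm_sub_sq hc0.symm).const_sub
    (Real.log (lam ^ 2))).hasFDerivWithinAt (s := closure (upperH n))
  have he : (EuclideanSpace.single i.castSucc 1 : E (n + 2)) (lastIdx n) = 0 := by
    simp [lastIdx, (Fin.castSucc_lt_last i).ne']
  have hsum : HasFDerivWithinAt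
      (fun x => v (moebius O lam c x) + (Real.log (lam ^ 2) - Real.log (‖x - c‖ ^ 2))) _
      (closure (upperH n)) 0 := hcomp.add hlog
  rw [hsum.fderivWithin (uniqueDiffOn_closure_upperH 0 zero_mem_closure_upperH),
    _root_.add_apply, ContinuousLinearMap.comp_apply,
    apply_fderiv_moebius_zero hlast hlam hc0 hc hcdef he]
  simp only [_root_.neg_apply, _root_.smul_apply, innerSL_apply_apply, zero_sub,
    inner_neg_left, norm_neg, smul_eq_mul]
  ring

end Gradient

end CLL

open CLL

/-- Lemma 2.5 of the paper: normalizing the tangential gradient at a boundary point by a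
Möbius transformation preserving the half space and the origin. -/
theorem stmt9 (n : ℕ) (v : E (n + 2) → ℝ) (ρ : ℝ) (hρ : 0 < ρ)
    (hv : ContDiffOn ℝ 1 v (closure (upperH n) ∩ Metric.ball 0 ρ))
    (hq : ∃ i : Fin (n + 1),
      pd (n + 2) (closure (upperH n) ∩ Metric.ball 0 ρ) v i.castSucc 0 ≠ 0)
    (lam : ℝ) (hlam : lam ≠ 0)
    (O' : Matrix (Fin (n + 1)) (Fin (n + 1)) ℝ)
    (hO' : O' ∈ Matrix.orthogonalGroup (Fin (n + 1)) ℝ) :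
    let S : Set (E (n + 2)) := closure (upperH n) ∩ Metric.ball 0 ρ
    let qe : Fin (n + 2) → ℝ := fun i =>
      if i = Fin.last (n + 1) then 0 else pd (n + 2) S v i 0
    let O : Matrix (Fin (n + 2)) (Fin (n + 2)) ℝ :=
      Matrix.reindex (finSumFinEquiv : Fin (n + 1) ⊕ Fin 1 ≃ Fin (n + 2))
        (finSumFinEquiv : Fin (n + 1) ⊕ Fin 1 ≃ Fin (n + 2))
        (Matrix.fromBlocks O' 0 0 (1 : Matrix (Fin 1) (Fin 1) ℝ))
    let xbar : E (n + 2) := WithLp.toLp 2 (fun i => lam ^ 2 / 2 * ∑ j, O j i * qe j)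
    let ψ : E (n + 2) → E (n + 2) := fun x => WithLp.toLp 2 (fun i =>
      ∑ j, O i j * (lam ^ 2 * (x j - xbar j) / ‖x - xbar‖ ^ 2
        + lam ^ 2 * xbar j / ‖xbar‖ ^ 2))
    let vψ : E (n + 2) → ℝ := fun x =>
      v (ψ x) + (1 / (n + 2 : ℝ)) *
        Real.log |LinearMap.det ((fderiv ℝ ψ x).toLinearMap)|
    xbar ≠ 0 ∧ xbar (Fin.last (n + 1)) = 0 ∧ ψ 0 = 0 ∧ ψ '' upperH n = upperH n ∧
      ∀ i : Fin (n + 1),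
        fderivWithin ℝ vψ (closure (upperH n)) 0 (EuclideanSpace.single i.castSucc 1) = 0 := by
  intro S qe O xbar ψ vψ
  have hO : O ∈ orthogonalGroup (Fin (n + 2)) ℝ := blockDiagOne_mem_orthogonalGroup O' hO'
  have hlast : ∀ y, (O *ᵥ y) (lastIdx n) = y (lastIdx n) := blockDiagOne_mulVec_last O'
  have hcdef : xbar.ofLp = (lam ^ 2 / 2) • (Oᵀ *ᵥ tangentialPart (fderivWithin ℝ v S 0)) := rfl
  have hc : xbar (lastIdx n) = 0 := by
    rw [hcdef, Pi.smul_apply, show Oᵀ = blockDiagOne O'ᵀ from transpose_blockDiagOne O',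
      blockDiagOne_mulVec_last]
    simp [tangentialPart, lastIdx]
  have hc0 : xbar ≠ 0 := by
    have h := smul_ne_zero (by positivity : lam ^ 2 / 2 ≠ 0)
      (transpose_mulVec_ne_zero hO (tangentialPart_ne_zero hq))
    rw [← hcdef] at h
    exact fun h0 => h (by rw [h0]; rfl)
  have hψ : ψ = moebius O lam xbar := funext fun x => by
    ext i
    exact (moebius_apply O lam xbar x i).symm
  have hv' : HasFDerivWithinAt v (fderivWithin ℝ v S 0) (closure (upperH n)) 0 :=
    (hasFDerivWithinAt_inter (ball_mem_nhds 0 hρ)).1 (hv.differentiableOn one_ne_zero 0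
      ⟨zero_mem_closure_upperH, mem_ball_self hρ⟩).hasFDerivWithinAt
  refine ⟨hc0, hc, hψ ▸ moebius_zero O lam xbar, hψ ▸ moebius_image_upperH hO hlast hc hlam,
    fun i => ?_⟩
  have hvψ : vψ =ᶠ[𝓝 0]
      fun x => v (moebius O lam xbar x) + (Real.log (lam ^ 2) - Real.log (‖x - xbar‖ ^ 2)) := by
    filter_upwards [isOpen_ne.mem_nhds hc0.symm] with x hx
    simp only [vψ, hψ, log_abs_det_fderiv_moebius hO hlam hx]
    push_cast
    field_simp
  rw [hvψ.fderivWithin_eq_of_nhds]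
  exact fderivWithin_moebius_add_log_tangential_eq_zero hlast hlam hc0 hc hcdef hv' i
end
end

section
/- Let θ > 0 and q > θ be constants, and let (φ, w) : I → (0, ∞) × ℝ be a C¹ solution, on an interval I ⊆ ℝ, of the system φ′ = φ·w, w′ = −θ·w² − φ^{−2q}. Then the quantity I_{θ,q}(φ, w) := φ^{2θ}·w² − (q − θ)^{−1}·φ^{−2(q−θ)} is constant along the solution, i.e. the function t ↦ I_{θ,q}(φ(t), w(t)) is constant on I. -/
/-! Along a solution, the derivative of `φ^{2θ} w²` is `-2 w φ^{2θ-2q}` (the `θ w³` terms cancel),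
which is exactly the derivative of `(q - θ)⁻¹ φ^{-2(q-θ)}`; a function with vanishing derivative on
an interval is constant. -/

noncomputable section

open Filter Metric Polynomial MeasureTheory
open scoped Topology

open CLL

theorem Convex.is_const_of_hasDerivWithinAt_zero {𝕜 G : Type*} [RCLike 𝕜] [NormedAddCommGroup G]
    [NormedSpace 𝕜 G] {f : 𝕜 → G} {s : Set 𝕜} (hs : Convex ℝ s)
    (hf : ∀ x ∈ s, HasDerivWithinAt f 0 s x) {x y : 𝕜} (hx : x ∈ s) (hy : y ∈ s) :
    f x = f y := by
  have h := norm_image_sub_le_of_norm_hasDerivWithin_le hf (fun _ _ => norm_zero.le) hs hx hy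
  rw [zero_mul, norm_le_zero_iff, sub_eq_zero] at h
  exact h.symm

def firstIntegral (θ q φ w : ℝ) : ℝ :=
  φ ^ (2 * θ) * w ^ 2 - (q - θ)⁻¹ * φ ^ (-(2 * (q - θ)))

theorem hasDerivWithinAt_firstIntegral {θ q : ℝ} (hq : q ≠ θ) {φ w : ℝ → ℝ} {s : Set ℝ} {t : ℝ}
    (hφpos : 0 < φ t) (hφ : HasDerivWithinAt φ (φ t * w t) s t)
    (hw : HasDerivWithinAt w (-θ * w t ^ 2 - φ t ^ (-(2 * q))) s t) :
    HasDerivWithinAt (fun u => firstIntegral θ q (φ u) (w u)) 0 s t := by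
  have hD := ((hφ.rpow_const (p := 2 * θ) (Or.inl hφpos.ne')).mul (hw.fun_pow 2)).sub
    ((hφ.rpow_const (p := -(2 * (q - θ))) (Or.inl hφpos.ne')).const_mul (q - θ)⁻¹)
  refine hD.congr_deriv ?_
  have hpow : φ t ^ (2 * θ) * φ t ^ (-(2 * q)) = φ t ^ (-(2 * (q - θ))) := by
    rw [← Real.rpow_add hφpos]; ring_nf
  rw [Real.rpow_sub_one hφpos.ne', Real.rpow_sub_one hφpos.ne']
  field_simp [sub_ne_zero.mpr hq]
  linear_combination (-2 * w t) * hpow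

theorem stmt19_general (θ q : ℝ) (hq : θ < q) (I : Set ℝ) (hI : I.OrdConnected)
    (φ w : ℝ → ℝ) (hφpos : ∀ t ∈ I, 0 < φ t)
    (hφ : ∀ t ∈ I, HasDerivWithinAt φ (φ t * w t) I t)
    (hw : ∀ t ∈ I, HasDerivWithinAt w (-θ * w t ^ 2 - φ t ^ (-(2 * q))) I t) :
    ∀ s ∈ I, ∀ t ∈ I,
      φ s ^ (2 * θ) * w s ^ 2 - (q - θ)⁻¹ * φ s ^ (-(2 * (q - θ)))
        = φ t ^ (2 * θ) * w t ^ 2 - (q - θ)⁻¹ * φ t ^ (-(2 * (q - θ))) := fun _ hs _ ht =>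
  hI.convex.is_const_of_hasDerivWithinAt_zero
    (fun u hu => hasDerivWithinAt_firstIntegral hq.ne' (hφpos u hu) (hφ u hu) (hw u hu)) hs ht

/-- The first integral `I_{θ,q}(φ,w) = φ^{2θ} w² - (q-θ)⁻¹ φ^{-2(q-θ)}` is constant along
solutions of `φ' = φ w`, `w' = -θ w² - φ^{-2q}` (proof of Lemma 4.5 of the paper). -/
theorem stmt19 (θ q : ℝ) (hθ : 0 < θ) (hq : θ < q) (I : Set ℝ) (hI : I.OrdConnected)
    (φ w : ℝ → ℝ) (hφpos : ∀ t ∈ I, 0 < φ t)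
    (hφ : ∀ t ∈ I, HasDerivWithinAt φ (φ t * w t) I t)
    (hw : ∀ t ∈ I, HasDerivWithinAt w (-θ * w t ^ 2 - φ t ^ (-(2 * q))) I t) :
    ∀ s ∈ I, ∀ t ∈ I,
      φ s ^ (2 * θ) * w s ^ 2 - (q - θ)⁻¹ * φ s ^ (-(2 * (q - θ)))
        = φ t ^ (2 * θ) * w t ^ 2 - (q - θ)⁻¹ * φ t ^ (-(2 * (q - θ))) :=
  stmt19_general θ q hq I hI φ w hφpos hφ hw
end
end
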